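/- arXiv:1807.01108 — 2 statements merged into one kernel-verified Lean document; each statement's English description precedes it below -/
import Mathlib

section
/- Let m ≥ 3, λ ≠ 0, and let f₀ : (0, ∞) → ℝ be a C² solution of f'' + ((m−1)/r − r/2) f' = −λ f. If f₀(r) converges to a finite nonzero limit as r → ∞, then a contradiction follows; hence any such solution converging at infinity must converge to 0 or be constant (and if λ ≠ 0, a nonconstant solution cannot have a finite limit at infinity). -/
/-!
With the integrating factor `φ r = r ^ (m - 1) * exp (-r ^ 2 / 4)` the equation reads
`(φ f')' = -λ φ f`. Replacing `f` by `-f` we may assume `λ A > 0`, so `(φ f')' ≤ -ε φ`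
for large `r`. If `φ f'` ever becomes negative it stays below a negative constant, and since
`φ → 0` this forces `f' ≤ -1` eventually, so `f → -∞`. Otherwise `φ f' ≥ 0`, and comparison
with `2 ε φ / r`, whose derivative is at least `-ε φ` as soon as `m ≥ 2`, gives `f' ≥ 2 ε / r`:
`f` grows like `2 ε log r`.
-/

open Real Filter Set

lemma antitoneOn_Ici_of_hasDerivAt_nonpos {h h' : ℝ → ℝ} {R : ℝ}
    (hd : ∀ x ≥ R, HasDerivAt h (h' x) x) (hle : ∀ x > R, h' x ≤ 0) :
    AntitoneOn h (Ici R) :=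
  antitoneOn_of_hasDerivWithinAt_nonpos (convex_Ici R)
    (fun x hx => (hd x hx).continuousAt.continuousWithinAt)
    (fun x hx => by rw [interior_Ici] at hx; exact (hd x (le_of_lt hx)).hasDerivWithinAt)
    (fun x hx => by rw [interior_Ici] at hx; exact hle x hx)

lemma tendsto_atTop_of_hasDerivAt_le {F G F' G' : ℝ → ℝ} {R : ℝ}
    (hF : ∀ x ≥ R, HasDerivAt F (F' x) x) (hG : ∀ x ≥ R, HasDerivAt G (G' x) x)
    (hle : ∀ x > R, G' x ≤ F' x) (hGlim : Tendsto G atTop atTop) : Tendsto F atTop atTop := by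
  have hanti : AntitoneOn (fun x => G x - F x) (Ici R) :=
    antitoneOn_Ici_of_hasDerivAt_nonpos (fun x hx => (hG x hx).sub (hF x hx))
      (fun x hx => sub_nonpos.2 (hle x hx))
  refine tendsto_atTop_mono' atTop ?_ (tendsto_atTop_add_const_left _ (F R - G R) hGlim)
  filter_upwards [eventually_ge_atTop R] with x hx
  have := hanti self_mem_Ici hx hx
  dsimp only at this
  linarith

noncomputable def driftWeight (a r : ℝ) : ℝ := r ^ a * exp (-(1 / 4) * r ^ 2)

lemma driftWeight_pos (a : ℝ) {r : ℝ} (hr : 0 < r) : 0 < driftWeight a r :=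
  mul_pos (rpow_pos_of_pos hr a) (exp_pos _)

lemma hasDerivAt_driftWeight (a : ℝ) {r : ℝ} (hr : 0 < r) :
    HasDerivAt (driftWeight a) ((a / r - r / 2) * driftWeight a r) r := by
  have hpow := hasDerivAt_rpow_const (p := a) (Or.inl hr.ne')
  have hexp := ((hasDerivAt_pow 2 r).const_mul (-(1 / 4 : ℝ))).exp
  refine (hpow.mul hexp).congr_deriv ?_
  rw [rpow_sub_one hr.ne', driftWeight]
  field_simp
  ring

lemma tendsto_driftWeight_atTop (a : ℝ) : Tendsto (driftWeight a) atTop (nhds 0) :=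
  (rpow_mul_exp_neg_mul_sq_isLittleO_exp_neg (by norm_num) a).trans_tendsto
    (tendsto_exp_atBot.comp (tendsto_id.const_mul_atTop_of_neg (by norm_num)))

lemma two_mul_driftWeight_div_le {a ε R : ℝ} {g g' : ℝ → ℝ} (ha : 1 ≤ a) (hR : 0 < R)
    (hε : 0 ≤ ε) (hg : ∀ r ≥ R, HasDerivAt g (g' r) r)
    (hg' : ∀ r > R, g' r ≤ -ε * driftWeight a r) (hg0 : ∀ r ≥ R, 0 ≤ g r)
    {r : ℝ} (hr : R ≤ r) :
    2 * ε * driftWeight a r / r ≤ g r := by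
  set ψ := fun s => 2 * ε * driftWeight a s / s
  have hψ : ∀ r > 0, HasDerivAt ψ (ε * (2 * (a - 1) / r ^ 2 - 1) * driftWeight a r) r :=
    fun r hr => (((hasDerivAt_driftWeight a hr).const_mul (2 * ε)).div (hasDerivAt_id r)
      hr.ne').congr_deriv (by simp only [id]; field_simp; ring)
  have hanti : AntitoneOn (fun r => g r - ψ r) (Ici R) := by
    refine antitoneOn_Ici_of_hasDerivAt_nonpos
      (fun r hr => (hg r hr).sub (hψ r (hR.trans_le hr))) (fun r hr => ?_)
    have hgap : 0 ≤ ε * (2 * (a - 1) / r ^ 2) * driftWeight a r :=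
      mul_nonneg (mul_nonneg hε (by have := sub_nonneg.2 ha; positivity))
        (driftWeight_pos a (hR.trans hr)).le
    linarith [hg' r hr]
  have hψlim : Tendsto ψ atTop (nhds 0) := by
    simpa using ((tendsto_driftWeight_atTop a).const_mul (2 * ε)).div_atTop tendsto_id
  have hdiff : 0 ≤ g r - ψ r := by
    refine le_of_tendsto (by simpa using hψlim.neg) ?_
    filter_upwards [eventually_ge_atTop r] with s hs
    have := hanti (mem_Ici.2 hr) (mem_Ici.2 (hr.trans hs)) hs
    linarith [hg0 s (hr.trans hs)]
  linarith

lemma hasDerivAt_driftWeight_mul {a lam : ℝ} {f f' f'' : ℝ → ℝ} {r : ℝ} (hr : 0 < r)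
    (hf' : HasDerivAt f' (f'' r) r) (hode : f'' r + (a / r - r / 2) * f' r = -lam * f r) :
    HasDerivAt (fun s => driftWeight a s * f' s) (-lam * f r * driftWeight a r) r := by
  refine ((hasDerivAt_driftWeight a hr).mul hf').congr_deriv ?_
  rw [← hode]
  ring

lemma drifted_radial_not_tendsto_of_mul_pos {a lam A : ℝ} {f f' f'' : ℝ → ℝ} (ha : 1 ≤ a)
    (hpos : 0 < lam * A)
    (hf : ∀ r > (0 : ℝ), HasDerivAt f (f' r) r)
    (hf' : ∀ r > (0 : ℝ), HasDerivAt f' (f'' r) r)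
    (hode : ∀ r > (0 : ℝ), f'' r + (a / r - r / 2) * f' r = -lam * f r) :
    ¬Tendsto f atTop (nhds A) := by
  intro hlim
  set φ := driftWeight a
  set g := fun r => φ r * f' r
  obtain ⟨ε, hε, hεA⟩ := exists_between hpos
  obtain ⟨R, hR0, hR⟩ : ∃ R > 0, ∀ r ≥ R, ε ≤ lam * f r := by
    obtain ⟨R, hR⟩ := ((hlim.const_mul lam).eventually_const_le hεA).exists_forall_of_atTop
    exact ⟨max R 1, by positivity, fun r hr => hR r (le_of_max_le_left hr)⟩
  have hg : ∀ r ≥ R, HasDerivAt g (-lam * f r * φ r) r := fun r hr =>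
    have hr0 := hR0.trans_le hr
    hasDerivAt_driftWeight_mul hr0 (hf' r hr0) (hode r hr0)
  have hg' : ∀ r ≥ R, -lam * f r * φ r ≤ -ε * φ r := fun r hr => by
    nlinarith [hR r hr, driftWeight_pos a (hR0.trans_le hr)]
  by_cases hsign : ∀ r ≥ R, 0 ≤ g r
  · have hlow : ∀ r ≥ R, 2 * ε * r⁻¹ ≤ f' r := fun r hr => by
      refine le_of_mul_le_mul_left ?_ (driftWeight_pos a (hR0.trans_le hr))
      calc φ r * (2 * ε * r⁻¹) = 2 * ε * φ r / r := by ring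
        _ ≤ g r := two_mul_driftWeight_div_le ha hR0 hε.le hg (fun s hs => hg' s hs.le) hsign hr
    refine not_tendsto_nhds_of_tendsto_atTop (tendsto_atTop_of_hasDerivAt_le
      (fun r hr => hf r (hR0.trans_le hr))
      (fun r hr => ((hasDerivAt_log (hR0.trans_le hr).ne').const_mul (2 * ε)))
      (fun r hr => hlow r hr.le) ((tendsto_log_atTop.const_mul_atTop (by positivity)))) A hlim
  · push Not at hsign
    obtain ⟨r₁, hr₁, hneg⟩ := hsign
    have hanti : AntitoneOn g (Ici R) := antitoneOn_Ici_of_hasDerivAt_nonpos hg fun r hr =>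
      (hg' r hr.le).trans (by nlinarith [driftWeight_pos a (hR0.trans hr)])
    obtain ⟨R₁, hR₁⟩ := ((tendsto_driftWeight_atTop a).eventually_le_const
      (show 0 < -g r₁ by linarith)).exists_forall_of_atTop
    have hup : ∀ r ≥ max r₁ R₁, 1 ≤ -f' r := fun r hr => by
      have hr₁r : r₁ ≤ r := le_of_max_le_left hr
      refine le_of_mul_le_mul_left ?_ (driftWeight_pos a (hR0.trans_le (hr₁.trans hr₁r)))
      have := hanti (mem_Ici.2 hr₁) (mem_Ici.2 (hr₁.trans hr₁r)) hr₁r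
      nlinarith [hR₁ r (le_of_max_le_right hr)]
    refine not_tendsto_nhds_of_tendsto_atTop (tendsto_atTop_of_hasDerivAt_le
      (fun r hr => (hf r (hR0.trans_le (hr₁.trans (le_of_max_le_left hr)))).neg)
      (fun r _ => hasDerivAt_id r) (fun r hr => hup r hr.le) tendsto_id) (-A) hlim.neg

/-- Radial reduction of the eigenvalue equation for the drifted Laplacian: if `λ ≠ 0` and
`f₀` is a `C²` solution on `(0,∞)` of `f'' + ((m−1)/r − r/2) f' = −λ f` which converges to
a finite nonzero limit `A` as `r → ∞`, then a contradiction follows. -/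
theorem radial_drifted_eigenfunction_no_nonzero_limit (m : ℕ) (hm : 3 ≤ m)
    (lam : ℝ) (hlam : lam ≠ 0) (A : ℝ) (hA : A ≠ 0)
    (f f' f'' : ℝ → ℝ)
    (hf : ∀ r > (0 : ℝ), HasDerivAt f (f' r) r)
    (hf' : ∀ r > (0 : ℝ), HasDerivAt f' (f'' r) r)
    (hode : ∀ r > (0 : ℝ), f'' r + (((m : ℝ) - 1) / r - r / 2) * f' r = -lam * f r)
    (hlim : Tendsto f atTop (nhds A)) :
    False := by
  have ha : 1 ≤ (m : ℝ) - 1 := by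
    have : (3 : ℝ) ≤ m := by exact_mod_cast hm
    linarith
  rcases (mul_ne_zero hlam hA).lt_or_gt with hneg | hpos
  · refine drifted_radial_not_tendsto_of_mul_pos (lam := lam) (A := -A)
      (f := -f) (f' := -f') (f'' := -f'') ha (by rw [mul_neg]; linarith) (fun r hr => (hf r hr).neg) (fun r hr => (hf' r hr).neg)
      (fun r hr => ?_) hlim.neg
    simp only [Pi.neg_apply]
    linear_combination -hode r hr
  · exact drifted_radial_not_tendsto_of_mul_pos ha hpos hf hf' hode hlim
end

section
/- Let m ≥ 3, λ ∈ ℝ, λ_k > 0, and let f be a C² solution on (0, ∞) of (f' r^{m−1} e^{-r²/4})' = r^{m−1} e^{-r²/4} V(r) f with V(r) = −λ e^{-r²/(2(m−2))} + λ_k/r² > 0 for r ≥ R. If f is not identically zero on [R, ∞) and f(r) → 0 as r → ∞, then a contradiction arises; hence f ≡ 0 on [R, ∞). -/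
/-!
With `w r = r^(m-1) e^(-r²/4)` the equation reads `(w f')' = w V f`. If `f > 0` and `f' ≥ 0` at
some point, the flux `w f'` increases as long as `f > 0`, so `f` grows and cannot decay: hence
`f' < 0` wherever `f > 0`, and symmetrically. At a zero `f'` must then vanish as well, and a
Gronwall weight on the interval before the first zero shows that a solution positive at one
point stays positive and decreasing. Finally `V ≤ C / r²` yields `w f' + f · 4C w / r³ ≥ 0`
(otherwise the flux stays below a negative constant and `f → -∞`), that is
`f' ≥ -4C f / r³`, so `f e^(-2C/r²)` is nondecreasing and `f` stays away from `0`.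
-/

open Real Filter Set Topology

theorem HasDerivAt.eventually_nhdsGT_lt {f : ℝ → ℝ} {d x : ℝ} (h : HasDerivAt f d x)
    (hd : 0 < d) : ∀ᶠ s in 𝓝[>] x, f x < f s := by
  filter_upwards [((hasDerivAt_iff_tendsto_slope.1 h).mono_left (nhdsGT_le_nhdsNE x)).eventually
    (eventually_gt_nhds hd), self_mem_nhdsWithin] with s hslope hs
  rw [slope_def_field] at hslope
  exact sub_pos.1 ((div_pos_iff_of_pos_right (sub_pos.2 hs)).1 hslope)

theorem eventually_nhdsGT_lt_of_deriv_pos {f f' : ℝ → ℝ} {c : ℝ} (hc : ContinuousAt f c)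
    (h : ∀ᶠ s in 𝓝[>] c, HasDerivAt f (f' s) s ∧ 0 < f' s) :
    ∀ᶠ s in 𝓝[>] c, f c < f s := by
  obtain ⟨u, hcu, hu⟩ := mem_nhdsGT_iff_exists_Ioo_subset.1 h
  filter_upwards [Ioo_mem_nhdsGT hcu] with s hs
  have hderiv : ∀ x ∈ Ioc c s, HasDerivAt f (f' x) x ∧ 0 < f' x :=
    fun x hx => hu ⟨hx.1, hx.2.trans_lt hs.2⟩
  refine strictMonoOn_of_hasDerivWithinAt_pos (f' := f') (convex_Icc c s) (fun x hx => ?_)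
    (fun x hx => ?_) (fun x hx => ?_) (left_mem_Icc.2 hs.1.le) (right_mem_Icc.2 hs.1.le) hs.1
  · rcases hx.1.eq_or_lt with rfl | hcx
    · exact hc.continuousWithinAt
    · exact (hderiv x ⟨hcx, hx.2⟩).1.continuousAt.continuousWithinAt
  · rw [interior_Icc] at hx
    exact (hderiv x (Ioo_subset_Ioc_self hx)).1.hasDerivWithinAt
  · rw [interior_Icc] at hx
    exact (hderiv x (Ioo_subset_Ioc_self hx)).2

theorem monotoneOn_of_hasDerivAt_nonneg {D : Set ℝ} (hD : Convex ℝ D) {f f' : ℝ → ℝ}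
    (hf : ∀ x ∈ D, HasDerivAt f (f' x) x) (hf' : ∀ x ∈ interior D, 0 ≤ f' x) :
    MonotoneOn f D :=
  monotoneOn_of_hasDerivWithinAt_nonneg hD (fun x hx => (hf x hx).continuousAt.continuousWithinAt)
    (fun x hx => (hf x (interior_subset hx)).hasDerivWithinAt) hf'

theorem antitoneOn_of_hasDerivAt_nonpos {D : Set ℝ} (hD : Convex ℝ D) {f f' : ℝ → ℝ}
    (hf : ∀ x ∈ D, HasDerivAt f (f' x) x) (hf' : ∀ x ∈ interior D, f' x ≤ 0) :
    AntitoneOn f D :=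
  antitoneOn_of_hasDerivWithinAt_nonpos hD (fun x hx => (hf x hx).continuousAt.continuousWithinAt)
    (fun x hx => (hf x (interior_subset hx)).hasDerivWithinAt) hf'

theorem tendsto_atBot_of_mul_deriv_le {p f f' : ℝ → ℝ} {R ε : ℝ}
    (hf : ∀ r ≥ R, HasDerivAt f (f' r) r) (hp : ∀ r ≥ R, 0 < p r)
    (hp0 : Tendsto p atTop (𝓝 0)) (hε : 0 < ε) (hflux : ∀ r ≥ R, p r * f' r ≤ -ε) :
    Tendsto f atTop atBot := by
  obtain ⟨N, hN⟩ := eventually_atTop.1 (hp0.eventually (gt_mem_nhds hε))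
  set N' := max N R
  have hderiv : ∀ r ≥ N', f' r ≤ -1 := fun r hr => by
    have hpr := hp r ((le_max_right N R).trans hr)
    have hpε := hN r ((le_max_left N R).trans hr)
    nlinarith [hflux r ((le_max_right N R).trans hr)]
  have hanti : AntitoneOn (fun r => f r + r) (Ici N') :=
    antitoneOn_of_hasDerivAt_nonpos (convex_Ici N')
      (fun x hx => (hf x ((le_max_right N R).trans hx)).add (hasDerivAt_id x)) fun x hx => by
        rw [interior_Ici] at hx
        linarith [hderiv x hx.le]
  refine tendsto_atBot_mono' atTop ?_
    (tendsto_atBot_add_const_left atTop (f N' + N') tendsto_neg_atTop_atBot)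
  filter_upwards [eventually_ge_atTop N'] with r hr
  have := hanti self_mem_Ici hr hr
  simp only at this
  linarith

theorem monotoneOn_mul_exp_of_deriv_ge {f f' : ℝ → ℝ} {a K : ℝ} (ha : 0 < a)
    (hf : ∀ r ≥ a, HasDerivAt f (f' r) r) (h : ∀ r ≥ a, 0 ≤ f' r + K * f r / r ^ 3) :
    MonotoneOn (fun r => f r * exp (-K / (2 * r ^ 2))) (Ici a) := by
  have hexponent : ∀ r ≠ 0, HasDerivAt (fun s => -K / (2 * s ^ 2)) (K / r ^ 3) r := by
    intro r hr
    refine ((hasDerivAt_const r (-K)).fun_div ((hasDerivAt_pow 2 r).const_mul 2)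
      (by positivity)).congr_deriv ?_
    field_simp
    ring
  refine monotoneOn_of_hasDerivAt_nonneg (convex_Ici a)
    (fun r hr => (hf r hr).mul (hexponent r (ha.trans_le hr).ne').exp) fun r hr => ?_
  rw [interior_Ici] at hr
  calc 0 ≤ (f' r + K * f r / r ^ 3) * exp (-K / (2 * r ^ 2)) :=
        mul_nonneg (h r hr.le) (exp_pos _).le
    _ = _ := by ring

theorem tendsto_pow_mul_exp_neg_sq_div_atTop (k : ℕ) {c : ℝ} (hc : 0 < c) :
    Tendsto (fun r : ℝ => r ^ k * exp (-r ^ 2 / c)) atTop (𝓝 0) := by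
  refine ((tendsto_rpow_abs_mul_exp_neg_mul_sq_cocompact (inv_pos.2 hc) k).mono_left
    atTop_le_cocompact).congr' ?_
  filter_upwards [eventually_ge_atTop 0] with r hr
  rw [abs_of_nonneg hr, rpow_natCast, neg_mul, ← div_eq_inv_mul, neg_div]

theorem eventually_neg_mul_exp_neg_sq_div_add_le (lam lamk : ℝ) {c : ℝ} (hc : 0 < c) :
    ∀ᶠ r in atTop, -lam * exp (-r ^ 2 / c) + lamk / r ^ 2 ≤ (|lamk| + 1) / r ^ 2 := by
  have hdecay := (tendsto_pow_mul_exp_neg_sq_div_atTop 2 hc).const_mul |lam|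
  rw [mul_zero] at hdecay
  filter_upwards [hdecay.eventually (gt_mem_nhds one_pos), eventually_gt_atTop 0] with r h1 hr
  have hexp : -lam * exp (-r ^ 2 / c) ≤ 1 / r ^ 2 := by
    rw [le_div_iff₀ (by positivity)]
    calc -lam * exp (-r ^ 2 / c) * r ^ 2 = -lam * (r ^ 2 * exp (-r ^ 2 / c)) := by ring
      _ ≤ |lam| * (r ^ 2 * exp (-r ^ 2 / c)) := by gcongr; exact neg_le_abs lam
      _ ≤ 1 := h1.le
  have hlamk : lamk / r ^ 2 ≤ |lamk| / r ^ 2 := by gcongr; exact le_abs_self lamk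
  rw [add_div]
  linarith

noncomputable def gaussianWeight (n : ℕ) (r : ℝ) : ℝ := r ^ n * exp (-r ^ 2 / 4)

theorem gaussianWeight_pos (n : ℕ) {r : ℝ} (hr : 0 < r) : 0 < gaussianWeight n r :=
  mul_pos (pow_pos hr n) (exp_pos _)

theorem continuous_gaussianWeight (n : ℕ) : Continuous (gaussianWeight n) := by
  unfold gaussianWeight
  fun_prop

theorem tendsto_gaussianWeight_atTop (n : ℕ) : Tendsto (gaussianWeight n) atTop (𝓝 0) :=
  tendsto_pow_mul_exp_neg_sq_div_atTop n four_pos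

theorem hasDerivAt_gaussianWeight (n : ℕ) {r : ℝ} (hr : r ≠ 0) :
    HasDerivAt (gaussianWeight n) (gaussianWeight n r * (n / r - r / 2)) r := by
  have hexp : HasDerivAt (fun s => exp (-s ^ 2 / 4)) (exp (-r ^ 2 / 4) * (-(2 * r) / 4)) r := by
    simpa using ((hasDerivAt_pow 2 r).neg.div_const 4).exp
  show HasDerivAt (fun s => s ^ n * exp (-s ^ 2 / 4))
    (r ^ n * exp (-r ^ 2 / 4) * (n / r - r / 2)) r
  refine ((hasDerivAt_pow n r).fun_mul hexp).congr_deriv ?_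
  rcases n with _ | n
  · simp only [pow_zero, CharP.cast_eq_zero, zero_div, zero_sub, zero_mul, one_mul]
    ring
  · rw [Nat.add_sub_cancel, pow_succ]
    push_cast
    field_simp
    ring

theorem hasDerivAt_gaussianWeight_div_cube (n : ℕ) {r : ℝ} (hr : r ≠ 0) :
    HasDerivAt (fun s => gaussianWeight n s / s ^ 3)
      (gaussianWeight n r * ((n - 3) - r ^ 2 / 2) / r ^ 4) r := by
  refine ((hasDerivAt_gaussianWeight n hr).fun_div (hasDerivAt_pow 3 r)
    (pow_ne_zero 3 hr)).congr_deriv ?_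
  field_simp
  ring

namespace SturmLiouville

structure IsSolution (p q f f' : ℝ → ℝ) (S : Set ℝ) : Prop where
  hasDerivAt : ∀ r ∈ S, HasDerivAt f (f' r) r
  hasDerivAt_flux : ∀ r ∈ S, HasDerivAt (fun s => p s * f' s) (q r * f r) r

namespace IsSolution

variable {p q f f' : ℝ → ℝ} {S : Set ℝ} {R : ℝ}

theorem neg (h : IsSolution p q f f' S) : IsSolution p q (-f) (-f') S where
  hasDerivAt r hr := (h.hasDerivAt r hr).neg
  hasDerivAt_flux r hr := by
    simpa only [Pi.neg_apply, mul_neg] using (h.hasDerivAt_flux r hr).fun_neg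

theorem mono (h : IsSolution p q f f' S) {T : Set ℝ} (hT : T ⊆ S) : IsSolution p q f f' T :=
  ⟨fun r hr => h.hasDerivAt r (hT hr), fun r hr => h.hasDerivAt_flux r (hT hr)⟩

theorem eq_zero_of_nonneg_of_deriv_nonpos {a b : ℝ} (h : IsSolution p q f f' (Icc a b))
    (hab : a ≤ b) (hpc : ContinuousOn p (Icc a b)) (hqc : ContinuousOn q (Icc a b))
    (hp : ∀ x ∈ Icc a b, 0 < p x) (hf : ∀ x ∈ Icc a b, 0 ≤ f x)
    (hf' : ∀ x ∈ Icc a b, f' x ≤ 0) (hfb : f b = 0) (hf'b : f' b = 0) : f a = 0 := by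
  obtain ⟨K₁, hK₁⟩ := isCompact_Icc.bddAbove_image hqc
  obtain ⟨K₂, hK₂⟩ := isCompact_Icc.bddAbove_image (hpc.inv₀ fun x hx => (hp x hx).ne')
  set K := max K₁ K₂
  -- A Gronwall-type weight: since `K ≥ q` and `K p ≥ 1`, the signs of `f` and `f'` make it grow.
  have hmono : MonotoneOn (fun s => (f s - p s * f' s) * exp (K * s)) (Icc a b) := by
    refine monotoneOn_of_hasDerivAt_nonneg (convex_Icc a b) (fun x hx =>
      ((h.hasDerivAt x hx).sub (h.hasDerivAt_flux x hx)).mul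
        ((hasDerivAt_id x).const_mul K).exp) fun x hx => ?_
    have hx := interior_subset hx
    have hqK : q x ≤ K := (hK₁ ⟨x, hx, rfl⟩).trans (le_max_left _ _)
    have hpK : 1 ≤ K * p x := by
      have := (hK₂ ⟨x, hx, rfl⟩).trans (le_max_right K₁ K₂)
      rwa [← div_le_iff₀ (hp x hx), one_div]
    have hkey : 0 ≤ f x * (K - q x) + f' x * (1 - K * p x) :=
      add_nonneg (mul_nonneg (hf x hx) (by linarith)) (mul_nonneg_of_nonpos_of_nonpos
        (hf' x hx) (by linarith))
    calc 0 ≤ (f x * (K - q x) + f' x * (1 - K * p x)) * exp (K * x) :=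
          mul_nonneg hkey (exp_pos _).le
      _ = _ := by simp only [Pi.sub_apply, id]; ring
  have hFa := hmono (left_mem_Icc.2 hab) (right_mem_Icc.2 hab) hab
  simp only [hfb, hf'b, mul_zero, sub_zero, zero_mul] at hFa
  have hflux : p a * f' a ≤ 0 :=
    mul_nonpos_of_nonneg_of_nonpos (hp a (left_mem_Icc.2 hab)).le (hf' a (left_mem_Icc.2 hab))
  have := nonpos_of_mul_nonpos_left hFa (exp_pos _)
  linarith [hf a (left_mem_Icc.2 hab)]

section MaximumPrinciple

variable (h : IsSolution p q f f' (Ici R)) (hp : ∀ r ≥ R, 0 < p r) (hq : ∀ r ≥ R, 0 < q r)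
include h hp hq

theorem eventually_nhdsGT_lt {c : ℝ} (hc : R ≤ c) (hfc : 0 < f c) (hf'c : 0 ≤ f' c) :
    ∀ᶠ s in 𝓝[>] c, f c < f s := by
  have hflux : ∀ᶠ s in 𝓝[>] c, p c * f' c < p s * f' s :=
    (h.hasDerivAt_flux c hc).eventually_nhdsGT_lt (mul_pos (hq c hc) hfc)
  refine eventually_nhdsGT_lt_of_deriv_pos (f' := f') (h.hasDerivAt c hc).continuousAt ?_
  filter_upwards [hflux, self_mem_nhdsWithin] with s hs hcs
  have hsR : R ≤ s := hc.trans (le_of_lt hcs)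
  refine ⟨h.hasDerivAt s hsR, pos_of_mul_pos_right ?_ (hp s hsR).le⟩
  exact (mul_nonneg (hp c hc).le hf'c).trans_lt hs

theorem le_of_deriv_nonneg {a : ℝ} (ha : R ≤ a) (hfa : 0 < f a) (hf'a : 0 ≤ f' a) :
    ∀ r ≥ a, f a ≤ f r := by
  intro r hr
  by_contra! hlt
  have hcont : ContinuousOn f (Icc a r) := fun x hx =>
    (h.hasDerivAt x (ha.trans hx.1)).continuousAt.continuousWithinAt
  obtain ⟨c, hc, hmax⟩ := isCompact_Icc.exists_isMaxOn (nonempty_Icc.2 hr) hcont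
  have hfac : f a ≤ f c := hmax (left_mem_Icc.2 hr)
  have hcr : c < r := lt_of_le_of_ne hc.2 (by rintro rfl; linarith)
  have hf'c : 0 ≤ f' c := by
    rcases hc.1.eq_or_lt with rfl | hac
    · exact hf'a
    · exact ((hmax.isLocalMax (Icc_mem_nhds hac hcr)).hasDerivAt_eq_zero
        (h.hasDerivAt c (ha.trans hac.le))).ge
  obtain ⟨s, hcs, hsr⟩ := ((h.eventually_nhdsGT_lt hp hq (ha.trans hc.1) (hfa.trans_le hfac)
    hf'c).and (Ioo_mem_nhdsGT hcr)).exists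
  exact (hmax ⟨hc.1.trans hsr.1.le, hsr.2.le⟩).not_gt hcs

variable (hlim : Tendsto f atTop (𝓝 0))
include hlim

theorem deriv_neg_of_pos {a : ℝ} (ha : R ≤ a) (hfa : 0 < f a) : f' a < 0 := by
  by_contra! hf'a
  have hbound : f a ≤ 0 := ge_of_tendsto hlim
    (eventually_atTop.2 ⟨a, h.le_of_deriv_nonneg hp hq ha hfa hf'a⟩)
  linarith

theorem deriv_pos_of_neg {a : ℝ} (ha : R ≤ a) (hfa : f a < 0) : 0 < f' a := by
  simpa using h.neg.deriv_neg_of_pos hp hq (by rw [← neg_zero]; exact hlim.neg) ha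
    (by simpa using hfa)

theorem deriv_nonneg_of_eq_zero {b : ℝ} (hb : R ≤ b) (hfb : f b = 0) : 0 ≤ f' b := by
  by_contra! hf'b
  have hneg : ∀ᶠ s in 𝓝[>] b, f s < 0 := by
    filter_upwards [(h.hasDerivAt b hb).neg.eventually_nhdsGT_lt (neg_pos.2 hf'b)] with s hs
    simpa [hfb] using hs
  have hincr : ∀ᶠ s in 𝓝[>] b, f b < f s := by
    refine eventually_nhdsGT_lt_of_deriv_pos (f' := f') (h.hasDerivAt b hb).continuousAt ?_
    filter_upwards [hneg, self_mem_nhdsWithin] with s hs hbs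
    have hsR : R ≤ s := hb.trans (le_of_lt hbs)
    exact ⟨h.hasDerivAt s hsR, h.deriv_pos_of_neg hp hq hlim hsR hs⟩
  obtain ⟨s, hs, hs'⟩ := (hneg.and hincr).exists
  linarith

theorem deriv_eq_zero_of_eq_zero {b : ℝ} (hb : R ≤ b) (hfb : f b = 0) : f' b = 0 := by
  refine le_antisymm ?_ (h.deriv_nonneg_of_eq_zero hp hq hlim hb hfb)
  simpa using h.neg.deriv_nonneg_of_eq_zero hp hq (by rw [← neg_zero]; exact hlim.neg) hb
    (by simpa using hfb)

theorem pos_of_pos (hpc : ContinuousOn p (Ici R)) (hqc : ContinuousOn q (Ici R))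
    {a : ℝ} (ha : R ≤ a) (hfa : 0 < f a) : ∀ s ≥ a, 0 < f s := by
  intro s hs
  by_contra! hfs
  have hcont : ContinuousOn f (Icc a s) := fun x hx =>
    (h.hasDerivAt x (ha.trans hx.1)).continuousAt.continuousWithinAt
  have hZ : IsCompact (Icc a s ∩ f ⁻¹' Iic 0) := isCompact_Icc.of_isClosed_subset
    (hcont.preimage_isClosed_of_isClosed isClosed_Icc isClosed_Iic) inter_subset_left
  obtain ⟨b, ⟨hb, hfb⟩, hleast⟩ := hZ.exists_isLeast ⟨s, right_mem_Icc.2 hs, hfs⟩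
  have hpos : ∀ x ∈ Ico a b, 0 < f x := fun x hx => by
    by_contra! hfx
    exact hx.2.not_ge (hleast ⟨⟨hx.1, hx.2.le.trans hb.2⟩, hfx⟩)
  have hfb0 : f b = 0 := by
    obtain ⟨c, hc, hfc⟩ := intermediate_value_Icc' hb.1 (hcont.mono (Icc_subset_Icc_right hb.2))
      ⟨hfb, hfa.le⟩
    have hbc : b ≤ c := hleast ⟨⟨hc.1, hc.2.trans hb.2⟩, hfc.le⟩
    rwa [le_antisymm hc.2 hbc] at hfc
  have hf'b := h.deriv_eq_zero_of_eq_zero hp hq hlim (ha.trans hb.1) hfb0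
  have hIcc : Icc a b ⊆ Ici R := fun x hx => ha.trans hx.1
  refine hfa.ne' ((h.mono hIcc).eq_zero_of_nonneg_of_deriv_nonpos hb.1 (hpc.mono hIcc)
    (hqc.mono hIcc) (fun x hx => hp x (hIcc hx)) (fun x hx => ?_) (fun x hx => ?_) hfb0 hf'b)
  · rcases hx.2.lt_or_eq with hxb | rfl
    · exact (hpos x ⟨hx.1, hxb⟩).le
    · exact hfb0.ge
  · rcases hx.2.lt_or_eq with hxb | rfl
    · exact (h.deriv_neg_of_pos hp hq hlim (hIcc hx) (hpos x ⟨hx.1, hxb⟩)).le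
    · exact hf'b.le

end MaximumPrinciple

variable {n : ℕ} {C : ℝ}

theorem not_tendsto_zero (h : IsSolution (gaussianWeight n) q f f' (Ici R)) (hR : 0 < R)
    (hRn : 4 * ((n : ℝ) - 3) ≤ R ^ 2) (hC : 0 ≤ C)
    (hq : ∀ r ≥ R, q r ≤ C * gaussianWeight n r / r ^ 2) (hf : ∀ r ≥ R, 0 < f r)
    (hf' : ∀ r ≥ R, f' r ≤ 0) : ¬ Tendsto f atTop (𝓝 0) := by
  intro hlim
  set w := gaussianWeight n
  have hw : ∀ r ≥ R, 0 < w r := fun r hr => gaussianWeight_pos n (hR.trans_le hr)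
  -- `Φ` is chosen with `Φ' ≤ -q`, so that `w f' + f Φ` is nonincreasing.
  set Φ := fun r => 4 * C * (w r / r ^ 3)
  have hΦ0 : ∀ r ≥ R, 0 ≤ Φ r := fun r hr =>
    mul_nonneg (by positivity) (div_nonneg (hw r hr).le (pow_nonneg (hR.le.trans hr) 3))
  have hΦ : ∀ r ≥ R, HasDerivAt Φ (4 * C * (w r * ((n - 3) - r ^ 2 / 2) / r ^ 4)) r :=
    fun r hr => (hasDerivAt_gaussianWeight_div_cube n (hR.trans_le hr).ne').const_mul _
  have hΦq : ∀ r ≥ R, 4 * C * (w r * ((n - 3) - r ^ 2 / 2) / r ^ 4) ≤ -q r := by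
    intro r hr
    have hr0 : 0 < r := hR.trans_le hr
    have hrn : (n : ℝ) - 3 - r ^ 2 / 2 ≤ -r ^ 2 / 4 := by nlinarith
    calc 4 * C * (w r * ((n - 3) - r ^ 2 / 2) / r ^ 4)
        ≤ 4 * C * (w r * (-r ^ 2 / 4) / r ^ 4) := by
          gcongr
          exact (hw r hr).le
      _ = -(C * w r / r ^ 2) := by field_simp
      _ ≤ -q r := neg_le_neg (hq r hr)
  have hanti : AntitoneOn (fun r => w r * f' r + f r * Φ r) (Ici R) := by
    refine antitoneOn_of_hasDerivAt_nonpos (convex_Ici R) (fun r hr =>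
      (h.hasDerivAt_flux r hr).add ((h.hasDerivAt r hr).mul (hΦ r hr))) fun r hr => ?_
    rw [interior_Ici] at hr
    have := mul_le_mul_of_nonneg_left (hΦq r hr.le) (hf r hr.le).le
    nlinarith [mul_nonpos_of_nonpos_of_nonneg (hf' r hr.le) (hΦ0 r hr.le)]
  have hflux : ∀ r ≥ R, 0 ≤ w r * f' r + f r * Φ r := by
    intro r hr
    by_contra! hneg
    refine not_tendsto_nhds_of_tendsto_atBot (tendsto_atBot_of_mul_deriv_le
      (fun s hs => h.hasDerivAt s (hr.trans hs)) (fun s hs => hw s (hr.trans hs))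
      (tendsto_gaussianWeight_atTop n) (neg_pos.2 hneg) fun s hs => ?_) 0 hlim
    have := hanti hr (hr.trans hs) hs
    nlinarith [mul_nonneg (hf s (hr.trans hs)).le (hΦ0 s (hr.trans hs))]
  have hderiv : ∀ r ≥ R, 0 ≤ f' r + 4 * C * f r / r ^ 3 := by
    intro r hr
    refine nonneg_of_mul_nonneg_right (a := w r) ?_ (hw r hr)
    calc 0 ≤ w r * f' r + f r * Φ r := hflux r hr
      _ = _ := by simp only [Φ]; ring
  have hψ := monotoneOn_mul_exp_of_deriv_ge hR (fun r hr => h.hasDerivAt r hr) hderiv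
  have hlower : ∀ s ≥ R, f R * exp (-(4 * C) / (2 * R ^ 2)) ≤ f s := fun s hs =>
    (hψ self_mem_Ici hs hs).trans (mul_le_of_le_one_right (hf s hs).le
      (exp_le_one_iff.2 (div_nonpos_of_nonpos_of_nonneg (by linarith) (by positivity))))
  have := ge_of_tendsto hlim (eventually_atTop.2 ⟨R, hlower⟩)
  linarith [mul_pos (hf R le_rfl) (exp_pos (-(4 * C) / (2 * R ^ 2)))]

theorem nonpos_of_tendsto_zero (h : IsSolution (gaussianWeight n) q f f' (Ici R)) (hR : 0 < R)
    (hq : ∀ r ≥ R, 0 < q r) (hqc : ContinuousOn q (Ici R)) (hC : 0 ≤ C)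
    (hqle : ∀ᶠ r in atTop, q r ≤ C * gaussianWeight n r / r ^ 2)
    (hlim : Tendsto f atTop (𝓝 0)) : ∀ r ≥ R, f r ≤ 0 := by
  intro a ha
  by_contra! hfa
  have hw : ∀ r ≥ R, 0 < gaussianWeight n r := fun r hr => gaussianWeight_pos n (hR.trans_le hr)
  have hpos := h.pos_of_pos hw hq hlim (continuous_gaussianWeight n).continuousOn hqc ha hfa
  obtain ⟨N, hN⟩ := eventually_atTop.1 hqle
  set R' := max (max a N) (2 * n)
  have haR' : a ≤ R' := (le_max_left a N).trans (le_max_left _ _)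
  have hNR' : N ≤ R' := (le_max_right a N).trans (le_max_left _ _)
  have hnR' : 2 * (n : ℝ) ≤ R' := le_max_right _ _
  refine (h.mono (Ici_subset_Ici.2 (ha.trans haR'))).not_tendsto_zero (hR.trans_le (ha.trans haR'))
    (by nlinarith) hC (fun r hr => hN r (hNR'.trans hr)) (fun r hr => hpos r (haR'.trans hr))
    (fun r hr => ?_) hlim
  exact (h.deriv_neg_of_pos hw hq hlim (ha.trans (haR'.trans hr)) (hpos r (haR'.trans hr))).le

end IsSolution

end SturmLiouville

theorem decaying_solution_vanishes_general (m : ℕ) (hm : 3 ≤ m) (lam lamk R : ℝ)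
    (hR : 0 < R)
    (f f' : ℝ → ℝ) (V : ℝ → ℝ)
    (hV : V = fun r => -lam * Real.exp (-r ^ 2 / (2 * ((m : ℝ) - 2))) + lamk / r ^ 2)
    (hVpos : ∀ r ≥ R, 0 < V r)
    (hf : ∀ r ≥ R, HasDerivAt f (f' r) r)
    (hdiv : ∀ r ≥ R, HasDerivAt (fun s : ℝ => f' s * s ^ (m - 1) * Real.exp (-s ^ 2 / 4))
      (r ^ (m - 1) * Real.exp (-r ^ 2 / 4) * (V r * f r)) r)
    (hlim : Tendsto f atTop (nhds 0)) :
    ∀ r ≥ R, f r = 0 := by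
  set w := gaussianWeight (m - 1)
  have hsol : SturmLiouville.IsSolution w (fun r => w r * V r) f f' (Ici R) :=
    ⟨hf, fun r hr => by
      simpa only [w, gaussianWeight, mul_comm, mul_left_comm, mul_assoc] using hdiv r hr⟩
  have hq : ∀ r ≥ R, 0 < w r * V r := fun r hr =>
    mul_pos (gaussianWeight_pos _ (hR.trans_le hr)) (hVpos r hr)
  have hqc : ContinuousOn (fun r => w r * V r) (Ici R) := by
    refine (continuous_gaussianWeight _).continuousOn.mul ?_
    rw [hV]
    fun_prop (disch := intro x hx; exact pow_ne_zero 2 (hR.trans_le hx).ne')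
  have hqle : ∀ᶠ r in atTop, w r * V r ≤ (|lamk| + 1) * w r / r ^ 2 := by
    have hc : 0 < 2 * ((m : ℝ) - 2) := by
      have : (3 : ℝ) ≤ m := by exact_mod_cast hm
      linarith
    filter_upwards [eventually_neg_mul_exp_neg_sq_div_add_le lam lamk hc, eventually_gt_atTop 0]
      with r hVr hr
    calc w r * V r ≤ w r * ((|lamk| + 1) / r ^ 2) :=
          mul_le_mul_of_nonneg_left (by rw [hV]; exact hVr) (gaussianWeight_pos _ hr).le
      _ = (|lamk| + 1) * w r / r ^ 2 := by ring
  have hlim' : Tendsto (-f) atTop (𝓝 0) := by rw [← neg_zero]; exact hlim.neg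
  intro r hr
  exact le_antisymm (hsol.nonpos_of_tendsto_zero hR hq hqc (by positivity) hqle hlim r hr)
    (neg_nonpos.1 (hsol.neg.nonpos_of_tendsto_zero hR hq hqc (by positivity) hqle hlim' r hr))

/-- Maximum-principle argument: a solution of the divergence-form ODE
`(f' r^{m−1} e^{-r²/4})' = r^{m−1} e^{-r²/4} V(r) f` with positive potential
`V(r) = −λ e^{-r²/(2(m−2))} + λ_k/r² > 0` on `[R, ∞)` which tends to `0` at infinity must
vanish identically on `[R, ∞)`. -/
theorem decaying_solution_vanishes (m : ℕ) (hm : 3 ≤ m) (lam lamk R : ℝ)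
    (hlamk : 0 < lamk) (hR : 0 < R)
    (f f' : ℝ → ℝ) (V : ℝ → ℝ)
    (hV : V = fun r => -lam * Real.exp (-r ^ 2 / (2 * ((m : ℝ) - 2))) + lamk / r ^ 2)
    (hVpos : ∀ r ≥ R, 0 < V r)
    (hf : ∀ r ≥ R, HasDerivAt f (f' r) r)
    (hdiv : ∀ r ≥ R, HasDerivAt (fun s : ℝ => f' s * s ^ (m - 1) * Real.exp (-s ^ 2 / 4))
      (r ^ (m - 1) * Real.exp (-r ^ 2 / 4) * (V r * f r)) r)
    (hlim : Tendsto f atTop (nhds 0)) :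
    ∀ r ≥ R, f r = 0 :=
  decaying_solution_vanishes_general m hm lam lamk R hR f f' V hV hVpos hf hdiv hlim
end
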